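/- With D = 0 and V = 0, Δ_MM - Δ_VM = 2F(1/2 + P/(2h) - (P+1)/2 - I_f) = F(P/h - P - 2I_f), which is strictly negative whenever h > 1 and I_f > 0; hence checkpointing mixed-memory strictly outperforms volatile-only memory in average peak AoI when checkpoint/restore overheads vanish and h > 1. -/
import Mathlib


/-- With D = 0, V = 0: Δ_MM - Δ_VM = 2F(1/2 + P/(2h) - (P+1)/2 - I_f)
= F(P/h - P - 2I_f), strictly negative when h > 1 (and I_f > 0). -/
theorem stmt_8 (F h P R I If D V : ℝ) (hF : 0 < F) (hh : 0 < h) (hP : 0 < P)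
    (hR : 0 < R) (hI : 0 < I) (hIf : 0 < If) (hD : D = 0) (hV : V = 0)
    (ΔMM ΔVM : ℝ)
    (hMM : ΔMM = 2 * F * (R + V + (D + 1) / 2 + P / (2 * h)) + I + 2 * P + 2 * D * h)
    (hVM : ΔVM = 2 * F * (R + (P + 1) / 2 + If) + I + 2 * P) :
    ΔMM - ΔVM = 2 * F * (1 / 2 + P / (2 * h) - (P + 1) / 2 - If) ∧
    ΔMM - ΔVM = F * (P / h - P - 2 * If) ∧
    (1 < h → ΔMM - ΔVM < 0) := by
  subst hD hV hMM hVM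
  have hh' : h ≠ 0 := ne_of_gt hh
  refine ⟨by ring, by field_simp; ring, ?_⟩
  intro h1
  have key : P / h < P := (div_lt_iff₀ hh).2 (by nlinarith)
  have : P / h - P - 2 * If < 0 := by linarith
  have e : 2 * F * (R + 0 + (0 + 1) / 2 + P / (2 * h)) + I + 2 * P + 2 * 0 * h -
      (2 * F * (R + (P + 1) / 2 + If) + I + 2 * P) = F * (P / h - P - 2 * If) := by
    field_simp; ring
  rw [e]
  exact mul_neg_of_pos_of_neg hF this
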